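/- arXiv:1812.10014 — 3 statements merged into one kernel-verified Lean document; each statement's English description precedes it below -/
import Mathlib

section
/- Let f₁, f₂ be functions analytic in a neighborhood of the origin and not identically zero, and let 0 < |q| < 1. Define the Jackson q-Casorati determinant C_J(f₁,f₂)(z) = f₁(z)·D_q f₂(z) - f₂(z)·D_q f₁(z). Then f₁ and f₂ are linearly independent over ℂ if and only if C_J(f₁,f₂) is not identically zero (on a punctured neighborhood of 0). -/
noncomputable def Dq (q : ℂ) (f : ℂ → ℂ) (z : ℂ) : ℂ := (f (q * z) - f z) / ((q - 1) * z)

/-- Jackson q-Casorati determinant. -/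
noncomputable def CJ (q : ℂ) (f₁ f₂ : ℂ → ℂ) (z : ℂ) : ℂ :=
  f₁ z * Dq q f₂ z - f₂ z * Dq q f₁ z

/-!
If `C_J(f₁, f₂)` vanishes then `f₁ z * f₂ (q z) = f₂ z * f₁ (q z)`, so the ratio `f₂ / f₁`, which
is meromorphic at `0`, is invariant under `z ↦ q z` near `0`. Along an orbit `q ^ k * z → 0` it is
constant, so it cannot tend to infinity; hence it tends to some `c`, equals `c` near `0`, and
`f₂ = c f₁` on the whole ball by the identity theorem. Conversely, a relation `a f₁ + b f₂ = 0`
evaluated at `z` and `q z` is a linear system whose determinant is `(q - 1) z C_J(f₁, f₂)(z)`.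
-/

open Filter Topology Metric

section QInvariant

variable {𝕜 α : Type*} [NormedField 𝕜] {q : 𝕜}

theorem mul_mem_ball_zero_of_norm_le_one (hq : ‖q‖ ≤ 1) {r : ℝ} {z : 𝕜} (hz : z ∈ ball 0 r) :
    q * z ∈ ball 0 r := by
  rw [mem_ball_zero_iff] at hz ⊢
  rw [norm_mul]
  exact (mul_le_of_le_one_left (norm_nonneg z) hq).trans_lt hz

theorem tendsto_const_mul_nhdsNE_zero (hq₀ : q ≠ 0) :
    Tendsto (q * ·) (𝓝[≠] (0 : 𝕜)) (𝓝[≠] 0) := by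
  refine tendsto_nhdsWithin_iff.2 ⟨?_, ?_⟩
  · simpa using ((continuous_const_mul q).tendsto 0).mono_left nhdsWithin_le_nhds
  · filter_upwards [self_mem_nhdsWithin] with z hz using mul_ne_zero hq₀ hz

theorem tendsto_pow_mul_nhdsNE_zero (hq₀ : q ≠ 0) (hq : ‖q‖ < 1) {z : 𝕜} (hz : z ≠ 0) :
    Tendsto (fun k : ℕ ↦ q ^ k * z) atTop (𝓝[≠] 0) := by
  refine tendsto_nhdsWithin_iff.2 ⟨?_, .of_forall fun k ↦ mul_ne_zero (pow_ne_zero k hq₀) hz⟩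
  simpa using (tendsto_pow_atTop_nhds_zero_of_norm_lt_one hq).mul_const z

theorem eventually_pure_le_of_tendsto_of_comp_mul_eq {g : 𝕜 → α} {l : Filter α} (hq₀ : q ≠ 0)
    (hq : ‖q‖ < 1) (hg : ∀ᶠ z in 𝓝[≠] 0, g (q * z) = g z) (hl : Tendsto g (𝓝[≠] 0) l) :
    ∀ᶠ z in 𝓝[≠] (0 : 𝕜), pure (g z) ≤ l := by
  obtain ⟨ε, hε, hsub⟩ := Metric.mem_nhdsWithin_iff.1 hg
  have hS : ball (0 : 𝕜) ε ∩ {0}ᶜ ∈ 𝓝[≠] (0 : 𝕜) :=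
    Set.inter_comm _ _ ▸ inter_mem_nhdsWithin _ (ball_mem_nhds 0 hε)
  filter_upwards [hS] with z hz
  have hmaps : ∀ w ∈ ball (0 : 𝕜) ε ∩ {0}ᶜ, q * w ∈ ball (0 : 𝕜) ε ∩ {0}ᶜ := by
    rintro w ⟨hwε, hw0⟩
    exact ⟨mul_mem_ball_zero_of_norm_le_one hq.le hwε, mul_ne_zero hq₀ hw0⟩
  have horbit : ∀ k : ℕ, q ^ k * z ∈ ball (0 : 𝕜) ε ∩ {0}ᶜ ∧ g (q ^ k * z) = g z := by
    intro k
    induction k with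
    | zero => simpa using hz
    | succ k ih =>
      rw [pow_succ', mul_assoc]
      exact ⟨hmaps _ ih.1, (hsub ih.1).trans ih.2⟩
  have := hl.comp (tendsto_pow_mul_nhdsNE_zero hq₀ hq hz.2)
  simpa [Function.comp_def, horbit, Tendsto, Filter.map_const] using this

end QInvariant

theorem eq_zero_and_eq_zero_of_mul_sub_mul_ne_zero {R : Type*} [CommRing R] [NoZeroDivisors R]
    {a b x y u v : R} (hdet : x * v - y * u ≠ 0) (h₁ : a * x + b * y = 0)
    (h₂ : a * u + b * v = 0) : a = 0 ∧ b = 0 :=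
  ⟨(mul_eq_zero.1 (by linear_combination v * h₁ - y * h₂ : a * (x * v - y * u) = 0)).resolve_right
      hdet,
    (mul_eq_zero.1 (by linear_combination x * h₂ - u * h₁ : b * (x * v - y * u) = 0)).resolve_right
      hdet⟩

theorem CJ_eq_div (q : ℂ) (f₁ f₂ : ℂ → ℂ) (z : ℂ) :
    CJ q f₁ f₂ z = (f₁ z * f₂ (q * z) - f₂ z * f₁ (q * z)) / ((q - 1) * z) := by
  unfold CJ Dq
  ring

theorem CJ_eq_zero_iff {q : ℂ} (hq : q ≠ 1) (f₁ f₂ : ℂ → ℂ) {z : ℂ} (hz : z ≠ 0) :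
    CJ q f₁ f₂ z = 0 ↔ f₁ z * f₂ (q * z) = f₂ z * f₁ (q * z) := by
  rw [CJ_eq_div, div_eq_zero_iff, sub_eq_zero]
  simp [sub_ne_zero.2 hq, hz]

section Meromorphic

variable {𝕜 : Type*} [NontriviallyNormedField 𝕜] {q : 𝕜} {f₁ f₂ : 𝕜 → 𝕜}

theorem exists_eventually_eq_const_mul_of_mul_comp_eq (hq₀ : q ≠ 0) (hq : ‖q‖ < 1)
    (hf₁ : AnalyticAt 𝕜 f₁ 0) (hf₂ : AnalyticAt 𝕜 f₂ 0) (hf₁0 : ∀ᶠ z in 𝓝[≠] 0, f₁ z ≠ 0)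
    (hrel : ∀ᶠ z in 𝓝[≠] 0, f₁ z * f₂ (q * z) = f₂ z * f₁ (q * z)) :
    ∃ c, ∀ᶠ z in 𝓝[≠] 0, f₂ z = c * f₁ z := by
  have hmero : MeromorphicAt (f₂ / f₁) 0 := hf₂.meromorphicAt.div hf₁.meromorphicAt
  have hinv : ∀ᶠ z in 𝓝[≠] 0, (f₂ / f₁) (q * z) = (f₂ / f₁) z := by
    filter_upwards [hrel, hf₁0, (tendsto_const_mul_nhdsNE_zero hq₀).eventually hf₁0]
      with z hz h₁ hq₁
    rw [Pi.div_apply, Pi.div_apply, div_eq_div_iff hq₁ h₁]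
    linear_combination hz
  rcases lt_or_ge (meromorphicOrderAt (f₂ / f₁) 0) 0 with hneg | hnonneg
  · obtain ⟨z, hz⟩ := (eventually_pure_le_of_tendsto_of_comp_mul_eq hq₀ hq hinv
      (tendsto_cobounded_of_meromorphicOrderAt_neg hneg)).exists
    exact (hz Bornology.isBounded_singleton rfl).elim
  · obtain ⟨c, hc⟩ := tendsto_nhds_of_meromorphicOrderAt_nonneg hmero hnonneg
    refine ⟨c, ?_⟩
    filter_upwards [eventually_pure_le_of_tendsto_of_comp_mul_eq hq₀ hq hinv hc, hf₁0]
      with z hz h₁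
    rw [pure_le_nhds_iff, Pi.div_apply, div_eq_iff h₁] at hz
    exact hz

end Meromorphic

theorem jackson_casorati_indep_iff_general (q : ℂ) (hq0 : 0 < ‖q‖)
    (hq1 : ‖q‖ < 1) (f₁ f₂ : ℂ → ℂ) (r : ℝ)
    (hf₁ : AnalyticOnNhd ℂ f₁ (Metric.ball (0 : ℂ) r))
    (hf₂ : AnalyticOnNhd ℂ f₂ (Metric.ball (0 : ℂ) r))
    (hne₁ : ∃ z ∈ Metric.ball (0 : ℂ) r, f₁ z ≠ 0) :
    (∀ a b : ℂ, (∀ z ∈ Metric.ball (0 : ℂ) r, a * f₁ z + b * f₂ z = 0) → a = 0 ∧ b = 0) ↔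
      ∃ z ∈ Metric.ball (0 : ℂ) r, z ≠ 0 ∧ CJ q f₁ f₂ z ≠ 0 := by
  have hq₀ : q ≠ 0 := norm_pos_iff.1 hq0
  have hq₁ : q ≠ 1 := by rintro rfl; simp at hq1
  have h0 : (0 : ℂ) ∈ ball (0 : ℂ) r := by
    obtain ⟨z, hz, -⟩ := hne₁
    exact mem_ball_self ((norm_nonneg z).trans_lt (mem_ball_zero_iff.1 hz))
  constructor
  · intro hindep
    by_contra! hCJ
    have hf₁0 : ∀ᶠ z in 𝓝[≠] 0, f₁ z ≠ 0 := by
      refine (hf₁ 0 h0).eventually_eq_zero_or_eventually_ne_zero.resolve_left fun hzero ↦ ?_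
      obtain ⟨z, hz, hfz⟩ := hne₁
      exact hfz (hf₁.eqOn_zero_of_preconnected_of_eventuallyEq_zero
        (convex_ball 0 r).isPreconnected h0 hzero hz)
    have hrel : ∀ᶠ z in 𝓝[≠] 0, f₁ z * f₂ (q * z) = f₂ z * f₁ (q * z) := by
      filter_upwards [nhdsWithin_le_nhds (ball_mem_nhds 0 (pos_of_mem_ball h0)),
        self_mem_nhdsWithin] with z hz hz0
      exact (CJ_eq_zero_iff hq₁ f₁ f₂ hz0).1 (hCJ z hz hz0)
    obtain ⟨c, hc⟩ :=
      exists_eventually_eq_const_mul_of_mul_comp_eq hq₀ hq1 (hf₁ 0 h0) (hf₂ 0 h0) hf₁0 hrel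
    have heq := hf₂.eqOn_of_preconnected_of_frequently_eq
      (fun z hz ↦ analyticAt_const.mul (hf₁ z hz)) (convex_ball 0 r).isPreconnected h0
      hc.frequently
    have := hindep c (-1) fun z hz ↦ by rw [heq hz, Pi.mul_apply]; ring
    norm_num at this
  · rintro ⟨z, hz, hz0, hCJ⟩ a b hab
    exact eq_zero_and_eq_zero_of_mul_sub_mul_ne_zero
      (fun h ↦ hCJ (by rw [CJ_eq_div, h, zero_div])) (hab z hz)
      (hab (q * z) (mul_mem_ball_zero_of_norm_le_one hq1.le hz))

theorem jackson_casorati_indep_iff (q : ℂ) (hq0 : 0 < ‖q‖)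
    (hq1 : ‖q‖ < 1) (f₁ f₂ : ℂ → ℂ) (r : ℝ) (hr : 0 < r)
    (hf₁ : AnalyticOnNhd ℂ f₁ (Metric.ball (0 : ℂ) r))
    (hf₂ : AnalyticOnNhd ℂ f₂ (Metric.ball (0 : ℂ) r))
    (hne₁ : ∃ z ∈ Metric.ball (0 : ℂ) r, f₁ z ≠ 0)
    (hne₂ : ∃ z ∈ Metric.ball (0 : ℂ) r, f₂ z ≠ 0) :
    (∀ a b : ℂ, (∀ z ∈ Metric.ball (0 : ℂ) r, a * f₁ z + b * f₂ z = 0) → a = 0 ∧ b = 0) ↔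
      ∃ z ∈ Metric.ball (0 : ℂ) r, z ≠ 0 ∧ CJ q f₁ f₂ z ≠ 0 :=
  jackson_casorati_indep_iff_general q hq0 hq1 f₁ f₂ r hf₁ hf₂ hne₁
end

section
/- Let 0 < |q| < 1, let A be analytic at the origin with A not identically zero, and let f₁, f₂ be linearly independent solutions, analytic at the origin, of D_q² f(z) + A(z) f(z) = 0. Then the Jackson q-Casorati determinant C(z) = f₁(z)·D_q f₂(z) - f₂(z)·D_q f₁(z) satisfies D_q C(z) = A(z)·(q-1)·z·C(z), and in particular D_q C is not identically zero, i.e., C ∉ Ker(D_q). -/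
/-!
The identity for `D_q C` is algebra: expand `f(qz) = f(z) + (q - 1) z D_q f(z)` for `f₁`, `f₂`
and their `D_q`, and use the equation. If `D_q C` vanished, `C` would vanish wherever `A` does
not, so the analytic function `(q - 1) z C(z) = f₁(z) f₂(qz) - f₂(z) f₁(qz)` would vanish
identically. Comparing lowest-order terms in `f₁(z) g(qz) = g(z) f₁(qz)` shows `q ^ ord g = q ^ ord f₁`,
so every nonzero solution `g` of this relation has the order of `f₁`; taking `g = f₂ - c f₁` with
`c` chosen to kill the leading term of `f₂` forces `g = 0`, i.e. `f₁` and `f₂` are dependent.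
-/

open Filter Topology Metric Set

section

variable {𝕜 : Type*} [NontriviallyNormedField 𝕜]

lemma eq_at_zero_of_pow_mul_eventuallyEq {a b : 𝕜 → 𝕜} (ha : ContinuousAt a 0)
    (hb : ContinuousAt b 0) (n : ℕ) (h : ∀ᶠ z in 𝓝 0, z ^ n * a z = z ^ n * b z) : a 0 = b 0 := by
  have hab : a =ᶠ[𝓝[≠] 0] b := by
    filter_upwards [nhdsWithin_le_nhds h, self_mem_nhdsWithin] with z hz hz0
    exact mul_left_cancel₀ (pow_ne_zero n hz0) hz
  exact tendsto_nhds_unique_of_eventuallyEq (ha.tendsto.mono_left nhdsWithin_le_nhds)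
    (hb.tendsto.mono_left nhdsWithin_le_nhds) hab

lemma exists_analyticAt_eventually_eq_pow_mul {f : 𝕜 → 𝕜} (hf : AnalyticAt 𝕜 f 0)
    (hf' : analyticOrderAt f 0 ≠ ⊤) :
    ∃ u : 𝕜 → 𝕜, AnalyticAt 𝕜 u 0 ∧ u 0 ≠ 0 ∧
      ∀ᶠ z in 𝓝 0, f z = z ^ analyticOrderNatAt f 0 * u z := by
  obtain ⟨u, hu, hu0, hfu⟩ := hf.analyticOrderAt_ne_top.mp hf'
  exact ⟨u, hu, hu0, hfu.mono fun z hz ↦ by simpa using hz⟩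

lemma Filter.Eventually.comp_const_mul_nhds_zero {q : 𝕜} {p : 𝕜 → Prop}
    (h : ∀ᶠ z in 𝓝 0, p z) : ∀ᶠ z in 𝓝 0, p (q * z) :=
  ((continuous_const_mul q).tendsto' 0 0 (mul_zero q)).eventually h

lemma ContinuousAt.comp_const_mul_zero {q : 𝕜} {u : 𝕜 → 𝕜} (hu : ContinuousAt u 0) :
    ContinuousAt (fun z ↦ u (q * z)) 0 :=
  hu.comp_of_eq (continuous_const_mul q).continuousAt (mul_zero q)

lemma analyticOrderNatAt_eq_of_mul_comp_eq {q : 𝕜} (hq0 : q ≠ 0) (hq1 : ‖q‖ < 1) {f g : 𝕜 → 𝕜}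
    (hf : AnalyticAt 𝕜 f 0) (hg : AnalyticAt 𝕜 g 0) (hf' : analyticOrderAt f 0 ≠ ⊤)
    (hg' : analyticOrderAt g 0 ≠ ⊤) (h : ∀ᶠ z in 𝓝 0, f z * g (q * z) = g z * f (q * z)) :
    analyticOrderNatAt f 0 = analyticOrderNatAt g 0 := by
  set k := analyticOrderNatAt f 0
  set m := analyticOrderNatAt g 0
  obtain ⟨u, hu, hu0, hfu⟩ := exists_analyticAt_eventually_eq_pow_mul hf hf'
  obtain ⟨v, hv, hv0, hgv⟩ := exists_analyticAt_eventually_eq_pow_mul hg hg'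
  have hlead := eq_at_zero_of_pow_mul_eventuallyEq (a := fun z ↦ q ^ m * u z * v (q * z))
    (b := fun z ↦ q ^ k * v z * u (q * z))
    ((continuousAt_const.mul hu.continuousAt).mul hv.continuousAt.comp_const_mul_zero)
    ((continuousAt_const.mul hv.continuousAt).mul hu.continuousAt.comp_const_mul_zero) (k + m) <| by
      filter_upwards [h, hfu, hgv, hfu.comp_const_mul_nhds_zero (q := q),
        hgv.comp_const_mul_nhds_zero (q := q)] with z hz hfz hgz hfqz hgqz
      rw [hfz, hgz, hfqz, hgqz, mul_pow, mul_pow] at hz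
      simp only [pow_add]
      linear_combination hz
  have hpow : q ^ k = q ^ m := by
    simp only [mul_zero] at hlead
    exact (mul_left_injective₀ (mul_ne_zero hu0 hv0) (by linear_combination hlead)).symm
  exact pow_right_injective₀ (norm_pos_iff.mpr hq0) hq1.ne (by simpa using congrArg norm hpow)

lemma exists_eventually_linear_dependence_of_mul_comp_eq {q : 𝕜} (hq0 : q ≠ 0) (hq1 : ‖q‖ < 1)
    {f₁ f₂ : 𝕜 → 𝕜} (hf₁ : AnalyticAt 𝕜 f₁ 0) (hf₂ : AnalyticAt 𝕜 f₂ 0)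
    (h : ∀ᶠ z in 𝓝 0, f₁ z * f₂ (q * z) = f₂ z * f₁ (q * z)) :
    ∃ a b : 𝕜, ¬(a = 0 ∧ b = 0) ∧ ∀ᶠ z in 𝓝 0, a * f₁ z + b * f₂ z = 0 := by
  by_cases h₁ : analyticOrderAt f₁ 0 = ⊤
  · exact ⟨1, 0, by simp, (analyticOrderAt_eq_top.mp h₁).mono fun z hz ↦ by simp [hz]⟩
  by_cases h₂ : analyticOrderAt f₂ 0 = ⊤
  · exact ⟨0, 1, by simp, (analyticOrderAt_eq_top.mp h₂).mono fun z hz ↦ by simp [hz]⟩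
  have h₁₂ := analyticOrderNatAt_eq_of_mul_comp_eq hq0 hq1 hf₁ hf₂ h₁ h₂ h
  obtain ⟨u, hu, hu0, hfu⟩ := exists_analyticAt_eventually_eq_pow_mul hf₁ h₁
  obtain ⟨v, hv, -, hfv⟩ := exists_analyticAt_eventually_eq_pow_mul hf₂ h₂
  rw [← h₁₂] at hfv
  set c := v 0 / u 0
  set f₃ := fun z ↦ f₂ z - c * f₁ z
  by_cases h₃ : analyticOrderAt f₃ 0 = ⊤
  · exact ⟨-c, 1, by simp, (analyticOrderAt_eq_top.mp h₃).mono fun z hz ↦ by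
      linear_combination hz⟩
  have hf₃ : AnalyticAt 𝕜 f₃ 0 := hf₂.sub (analyticAt_const.mul hf₁)
  have h₃₁ := analyticOrderNatAt_eq_of_mul_comp_eq hq0 hq1 hf₃ hf₁ h₃ h₁ <| by
    filter_upwards [h] with z hz
    linear_combination -hz
  obtain ⟨w, hw, hw0, hfw⟩ := exists_analyticAt_eventually_eq_pow_mul hf₃ h₃
  rw [h₃₁] at hfw
  -- the choice of `c` makes the leading coefficient of `f₃` vanish
  have hw_eq := eq_at_zero_of_pow_mul_eventuallyEq (b := fun z ↦ v z - c * u z) hw.continuousAt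
    (hv.continuousAt.sub (continuousAt_const.mul hu.continuousAt)) _ <| by
      filter_upwards [hfu, hfv, hfw] with z hfz hgz hwz
      rw [← hwz, show f₃ z = f₂ z - c * f₁ z from rfl, hfz, hgz]
      ring
  exact absurd (by rw [hw_eq, div_mul_cancel₀ _ hu0, sub_self]) hw0

lemma AnalyticOnNhd.comp_const_mul_ball {q : 𝕜} {r : ℝ} {f : 𝕜 → 𝕜} (hq : ‖q‖ ≤ 1)
    (hf : AnalyticOnNhd 𝕜 f (ball 0 r)) : AnalyticOnNhd 𝕜 (fun z ↦ f (q * z)) (ball 0 r) :=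
  hf.comp (analyticOnNhd_const.mul analyticOnNhd_id) fun z hz ↦ by
    rw [mem_ball_zero_iff] at hz ⊢
    rw [norm_mul]
    exact (mul_le_of_le_one_left (norm_nonneg z) hq).trans_lt hz

end

lemma apply_mul_eq_add_mul_Dq {q z : ℂ} (f : ℂ → ℂ) (hz : (q - 1) * z ≠ 0) :
    f (q * z) = f z + (q - 1) * z * Dq q f z := by
  rw [Dq, mul_div_cancel₀ _ hz]; ring

lemma Dq_CJ_eq {q z : ℂ} {A f₁ f₂ : ℂ → ℂ} (hq : q ≠ 1) (hz : z ≠ 0)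
    (h₁ : Dq q (Dq q f₁) z + A z * f₁ z = 0) (h₂ : Dq q (Dq q f₂) z + A z * f₂ z = 0) :
    Dq q (CJ q f₁ f₂) z = A z * (q - 1) * z * CJ q f₁ f₂ z := by
  have hw : (q - 1) * z ≠ 0 := mul_ne_zero (sub_ne_zero.mpr hq) hz
  rw [Dq, CJ, CJ, apply_mul_eq_add_mul_Dq f₁ hw, apply_mul_eq_add_mul_Dq f₂ hw,
    apply_mul_eq_add_mul_Dq (Dq q f₁) hw, apply_mul_eq_add_mul_Dq (Dq q f₂) hw,
    eq_neg_of_add_eq_zero_left h₁, eq_neg_of_add_eq_zero_left h₂]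
  field_simp
  ring

-- Also at `z = 0` and `q = 1`, where both sides are `0` (`Dq` divides by zero there).
lemma mul_comp_sub_mul_comp_eq_mul_CJ (q : ℂ) (f₁ f₂ : ℂ → ℂ) (z : ℂ) :
    f₁ z * f₂ (q * z) - f₂ z * f₁ (q * z) = (q - 1) * z * CJ q f₁ f₂ z := by
  by_cases hw : (q - 1) * z = 0
  · have hqz : q * z = z := by linear_combination hw
    rw [hqz, hw, zero_mul]; ring
  · rw [CJ, apply_mul_eq_add_mul_Dq f₁ hw, apply_mul_eq_add_mul_Dq f₂ hw]; ring

theorem jackson_casorati_not_in_kernel (q : ℂ) (hq0 : 0 < ‖q‖)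
    (hq1 : ‖q‖ < 1) (A f₁ f₂ : ℂ → ℂ) (r : ℝ) (hr : 0 < r)
    (hA : AnalyticOnNhd ℂ A (Metric.ball (0 : ℂ) r))
    (hAne : ∃ z ∈ Metric.ball (0 : ℂ) r, A z ≠ 0)
    (hf₁ : AnalyticOnNhd ℂ f₁ (Metric.ball (0 : ℂ) r))
    (hf₂ : AnalyticOnNhd ℂ f₂ (Metric.ball (0 : ℂ) r))
    (heq₁ : ∀ z ∈ Metric.ball (0 : ℂ) r, z ≠ 0 → Dq q (Dq q f₁) z + A z * f₁ z = 0)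
    (heq₂ : ∀ z ∈ Metric.ball (0 : ℂ) r, z ≠ 0 → Dq q (Dq q f₂) z + A z * f₂ z = 0)
    (hindep : ∀ a b : ℂ, (∀ z ∈ Metric.ball (0 : ℂ) r, a * f₁ z + b * f₂ z = 0) →
      a = 0 ∧ b = 0) :
    (∀ z ∈ Metric.ball (0 : ℂ) r, z ≠ 0 →
        Dq q (CJ q f₁ f₂) z = A z * (q - 1) * z * CJ q f₁ f₂ z) ∧
      ∃ z ∈ Metric.ball (0 : ℂ) r, z ≠ 0 ∧ Dq q (CJ q f₁ f₂) z ≠ 0 := by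
  have hq_ne_one : q ≠ 1 := by rintro rfl; simp at hq1
  have hCJ : ∀ z ∈ ball (0 : ℂ) r, z ≠ 0 →
      Dq q (CJ q f₁ f₂) z = A z * (q - 1) * z * CJ q f₁ f₂ z :=
    fun z hz hz0 ↦ Dq_CJ_eq hq_ne_one hz0 (heq₁ z hz hz0) (heq₂ z hz hz0)
  refine ⟨hCJ, ?_⟩
  by_contra! hker
  obtain ⟨z₁, hz₁, hAz₁⟩ := hAne
  have hg : ∀ z ∈ ball (0 : ℂ) r, A z ≠ 0 → f₁ z * f₂ (q * z) - f₂ z * f₁ (q * z) = 0 := by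
    intro z hz hAz
    rw [mul_comp_sub_mul_comp_eq_mul_CJ]
    rcases eq_or_ne z 0 with rfl | hz0
    · ring
    · simpa [hAz] using (hCJ z hz hz0).symm.trans (hker z hz hz0)
  have hrel : EqOn (fun z ↦ f₁ z * f₂ (q * z) - f₂ z * f₁ (q * z)) 0 (ball 0 r) :=
    ((hf₁.mul (hf₂.comp_const_mul_ball hq1.le)).sub (hf₂.mul (hf₁.comp_const_mul_ball hq1.le)))
      |>.eqOn_zero_of_preconnected_of_eventuallyEq_zero (convex_ball 0 r).isPreconnected hz₁ <| by
        filter_upwards [isOpen_ball.mem_nhds hz₁, (hA z₁ hz₁).continuousAt.eventually_ne hAz₁]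
          with z hz hAz using hg z hz hAz
  obtain ⟨a, b, hab, hdep⟩ := exists_eventually_linear_dependence_of_mul_comp_eq
    (norm_pos_iff.mp hq0) hq1 (hf₁ 0 (mem_ball_self hr)) (hf₂ 0 (mem_ball_self hr)) <| by
      filter_upwards [ball_mem_nhds 0 hr] with z hz using sub_eq_zero.mp (hrel hz)
  refine hab (hindep a b fun z hz ↦ ?_)
  exact ((analyticOnNhd_const.mul hf₁).add (analyticOnNhd_const.mul hf₂))
    |>.eqOn_zero_of_preconnected_of_eventuallyEq_zero (convex_ball 0 r).isPreconnected
      (mem_ball_self hr) hdep hz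
end

section
/- Let 0 < |q| < 1 and let P be a polynomial. Define f(z) = ∏_{j=0}^∞ (1 + (1-q) q^j z P(q^j z)). This product converges locally uniformly on ℂ, so f is entire, and f satisfies the Jackson q-difference equation D_q f(z) = P(z)·f(qz) for all z ≠ 0; equivalently f(z) = (1 + (1-q) z P(z))·f(qz). -/
/-!
Writing the `j`-th factor as `1 + q ^ j z h (q ^ j z)` with `h w = (1 - q) P(w)`, on a disc
`|z| ≤ R` its deviation from `1` is at most `|q| ^ j R sup_{|w| ≤ R} |h w|`, a summable geometric
bound. Hence the product converges locally uniformly, and its limit is entire as a locally uniform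
limit of polynomials. Splitting off the factor `j = 0` leaves the product at `q z`, which gives the
functional equation, and dividing by `(q - 1) z` turns it into the Jackson equation.
-/

open Filter Metric

noncomputable def qShiftProd (q : ℂ) (h : ℂ → ℂ) (z : ℂ) : ℂ :=
  ∏' j : ℕ, (1 + q ^ j * z * h (q ^ j * z))

section

variable {q : ℂ} {h : ℂ → ℂ}

lemma exists_norm_pow_mul_mul_le (hq : ‖q‖ < 1) (hh : Continuous h) (R : ℝ) :
    ∃ C : ℝ, ∀ j : ℕ, ∀ z ∈ closedBall (0 : ℂ) R,
      ‖q ^ j * z * h (q ^ j * z)‖ ≤ ‖q‖ ^ j * (R * C) := by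
  obtain ⟨C, hC⟩ := (isCompact_closedBall (0 : ℂ) R).exists_bound_of_continuousOn hh.continuousOn
  refine ⟨C, fun j z hz => ?_⟩
  rw [mem_closedBall_zero_iff] at hz
  have hqj : ‖q‖ ^ j ≤ 1 := pow_le_one₀ (norm_nonneg q) hq.le
  have hmem : q ^ j * z ∈ closedBall (0 : ℂ) R := by
    rw [mem_closedBall_zero_iff, norm_mul, norm_pow]
    exact (mul_le_of_le_one_left (norm_nonneg z) hqj).trans hz
  rw [norm_mul, norm_mul, norm_pow, mul_assoc]
  gcongr
  exacts [(norm_nonneg z).trans hz, hC _ hmem]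

lemma hasProdLocallyUniformlyOn_qShiftProd_ball (hq : ‖q‖ < 1) (hh : Continuous h) (R : ℝ) :
    HasProdLocallyUniformlyOn (fun j z => 1 + q ^ j * z * h (q ^ j * z)) (qShiftProd q h)
      (ball 0 R) := by
  obtain ⟨C, hC⟩ := exists_norm_pow_mul_mul_le hq hh R
  refine ((summable_geometric_of_lt_one (norm_nonneg q) hq).mul_right (R * C))
    |>.hasProdLocallyUniformlyOn_nat_one_add isOpen_ball
      (.of_forall fun j z hz => hC j z (ball_subset_closedBall hz)) fun j => ?_
  exact (continuous_const.mul continuous_id).mul (hh.comp (continuous_const.mul continuous_id))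
    |>.continuousOn

lemma multipliable_qShiftProd_factors (hq : ‖q‖ < 1) (hh : Continuous h) (z : ℂ) :
    Multipliable fun j : ℕ => 1 + q ^ j * z * h (q ^ j * z) :=
  (hasProdLocallyUniformlyOn_qShiftProd_ball hq hh (‖z‖ + 1) |>.hasProd
    (mem_ball_zero_iff.mpr (lt_add_one _))).multipliable

lemma differentiable_qShiftProd (hq : ‖q‖ < 1) (hh : Differentiable ℂ h) :
    Differentiable ℂ (qShiftProd q h) := by
  intro z
  have hlim := hasProdLocallyUniformlyOn_qShiftProd_ball hq hh.continuous (‖z‖ + 1)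
  have hpartial : ∀ s : Finset ℕ, DifferentiableOn ℂ
      (fun w => ∏ j ∈ s, (1 + q ^ j * w * h (q ^ j * w))) (ball 0 (‖z‖ + 1)) := fun s =>
    (Differentiable.fun_finsetProd fun j _ => by fun_prop).differentiableOn
  exact (hlim.differentiableOn (.of_forall hpartial) isOpen_ball).differentiableAt
    (isOpen_ball.mem_nhds (mem_ball_zero_iff.mpr (lt_add_one _)))

lemma qShiftProd_eq_one_add_mul_mul_qShiftProd (hq : ‖q‖ < 1) (hh : Continuous h) (z : ℂ) :
    qShiftProd q h z = (1 + z * h z) * qShiftProd q h (q * z) := by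
  have hshift : ∀ j : ℕ, q ^ j * (q * z) = q ^ (j + 1) * z := fun j => by ring
  unfold qShiftProd
  have hmul := multipliable_qShiftProd_factors hq hh (q * z)
  rw [tprod_eq_zero_mul' (by simpa only [hshift] using hmul)]
  simp only [pow_zero, one_mul, hshift]

end

theorem jackson_product_solution_general (q : ℂ)
    (hq1 : ‖q‖ < 1) (P : Polynomial ℂ) :
    let f : ℂ → ℂ := fun z => ∏' j : ℕ, (1 + (1 - q) * q ^ j * z * P.eval (q ^ j * z))
    (∀ z : ℂ, Multipliable (fun j : ℕ => (1 + (1 - q) * q ^ j * z * P.eval (q ^ j * z)))) ∧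
    Differentiable ℂ f ∧
    (∀ z : ℂ, f z = (1 + (1 - q) * z * P.eval z) * f (q * z)) ∧
    (∀ z : ℂ, z ≠ 0 → Dq q f z = P.eval z * f (q * z)) := by
  intro f
  set h : ℂ → ℂ := fun w => (1 - q) * P.eval w
  have hh : Differentiable ℂ h := (differentiable_const _).mul P.differentiable
  have hfactor : ∀ j : ℕ, ∀ z : ℂ,
      1 + (1 - q) * q ^ j * z * P.eval (q ^ j * z) = 1 + q ^ j * z * h (q ^ j * z) :=
    fun j z => by ring
  have hf : f = qShiftProd q h := funext fun z => tprod_congr fun j => hfactor j z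
  have hfun : ∀ z : ℂ, f z = (1 + (1 - q) * z * P.eval z) * f (q * z) := fun z => by
    rw [hf, qShiftProd_eq_one_add_mul_mul_qShiftProd hq1 hh.continuous z]
    ring
  refine ⟨fun z => by
      simpa only [hfactor] using multipliable_qShiftProd_factors hq1 hh.continuous z,
    hf ▸ differentiable_qShiftProd hq1 hh, hfun, fun z hz => ?_⟩
  have hq : q - 1 ≠ 0 := sub_ne_zero.mpr fun h1 => by simp [h1] at hq1
  rw [Dq, hfun z, div_eq_iff (mul_ne_zero hq hz)]
  ring

theorem jackson_product_solution (q : ℂ) (hq0 : 0 < ‖q‖)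
    (hq1 : ‖q‖ < 1) (P : Polynomial ℂ) :
    let f : ℂ → ℂ := fun z => ∏' j : ℕ, (1 + (1 - q) * q ^ j * z * P.eval (q ^ j * z))
    (∀ z : ℂ, Multipliable (fun j : ℕ => (1 + (1 - q) * q ^ j * z * P.eval (q ^ j * z)))) ∧
    Differentiable ℂ f ∧
    (∀ z : ℂ, f z = (1 + (1 - q) * z * P.eval z) * f (q * z)) ∧
    (∀ z : ℂ, z ≠ 0 → Dq q f z = P.eval z * f (q * z)) :=
  jackson_product_solution_general q hq1 P
end
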